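/- Let the Σ₂ family {p₀, p₂, p₃, p₄, …} be multiplicatively closed with z² p_j in its ℂ-linear span for every j. Then for every n ≥ 1, in ℂ((z⁻¹)) with λ = z², one has p_{2n+1} = (λ^{n−1} − ∑_{i=0}^{n−2} H^{2(n−i)−1}_{−1} λ^i) · p₃; in particular this follows from the recursion p_{2n+1} = λ p_{2n−1} − H^{2n−1}_{−1} p₃ for n ≥ 2. -/

import Mathlib

open Finset

noncomputable section

/-- `z^j` viewed as a formal Laurent series in `t = z⁻¹` (so `z^j = t^(-j)`). -/
def zp (j : ℤ) : LaurentSeries ℂ := HahnSeries.single (-j) 1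

/-- The element `p₀ = 1 + ∑_{k ≥ 1} H^0_k z^(-k)` of the `Σ₂` family. -/
def sigma2zero (H : ℕ → ℤ → ℂ) : LaurentSeries ℂ :=
  1 + HahnSeries.ofPowerSeries ℤ ℂ (PowerSeries.mk fun k => if 1 ≤ k then H 0 (k:ℤ) else 0)

/-- The elements `p_j = z^j + H^j_{-1} z + ∑_{k ≥ 1} H^j_k z^(-k)`, `j ≥ 2`, of the `Σ₂`
family. -/
def sigma2 (H : ℕ → ℤ → ℂ) (j : ℕ) : LaurentSeries ℂ :=
  zp j + H j (-1) • zp 1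
    + HahnSeries.ofPowerSeries ℤ ℂ (PowerSeries.mk fun k => if 1 ≤ k then H j (k:ℤ) else 0)

/-- The `Σ₂` family `{p₀, p₂, p₃, p₄, …}` as a set of Laurent series. -/
def sigma2Set (H : ℕ → ℤ → ℂ) : Set (LaurentSeries ℂ) :=
  insert (sigma2zero H) (sigma2 H '' {j | 2 ≤ j})

/-!
The coefficients of `z⁰` and of `zᵏ`, `k ≥ 2`, are coordinates on the span of the family
(`p₀` counting as index `0`), so an element of the span is determined by them. As `p₀ - 1`
has only negative powers of `z`, comparing coordinates turns `p₀² ∈ span` into `p₀² = p₀`,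
i.e. `p₀ = 1`; then `z^{2k} = z² p_{2k-2}` lies in the span and equals `p_{2k}`.
Writing `p₃ = q + O(z⁻¹)` with `q = z³ + H³₋₁ z`, the element `p₃² - q²` of the span has no
`zᵏ`-terms for `k ≥ 3`, so `p₃²` is even in `z`, and as `ℂ((z⁻¹))` is a domain `p₃` is odd.
Finally, comparing coordinates gives `z² p_j = p_{j+2} + H^j_{-1} p₃` as soon as `p_j` has no
`z⁻²`-term, which holds whenever `p_j` is an even series times `p₃`; induction on `n` finishes.
-/

theorem eq_zero_of_mem_span_range_of_biorthogonal {ι R M : Type*} [Semiring R] [AddCommMonoid M]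
    [Module R M] {b : ι → M} {f : ι → M →ₗ[R] R} (hself : ∀ i, f i (b i) = 1)
    (hne : ∀ i j, i ≠ j → f i (b j) = 0) {v : M} (hv : v ∈ Submodule.span R (Set.range b))
    (hf : ∀ i, f i v = 0) : v = 0 := by
  classical
  obtain ⟨c, rfl⟩ := Finsupp.mem_span_range_iff_exists_finsupp.mp hv
  have hcoord (i : ι) : f i (c.sum fun j a => a • b j) = c i := by
    rw [map_finsuppSum, Finsupp.sum, Finset.sum_eq_single i (fun j _ hji => by
      rw [map_smul, hne i j hji.symm, smul_zero]) (fun hi => by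
      rw [Finsupp.notMem_support_iff.mp hi, zero_smul, map_zero]), map_smul, hself, smul_eq_mul,
      mul_one]
  have hc : c = 0 := Finsupp.ext fun i => (hcoord i).symm.trans (hf i)
  simp [hc]

section Parity

variable (R : Type*)

def parityComponent [Semiring R] (r : ZMod 2) : Submodule R (LaurentSeries R) where
  carrier := {x | ∀ m : ℤ, (m : ZMod 2) ≠ r → x.coeff m = 0}
  add_mem' hx hy m hm := by simp [hx m hm, hy m hm]
  zero_mem' _ _ := rfl
  smul_mem' c x hx m hm := by simp [hx m hm]

variable {R}

theorem single_mem_parityComponent [Semiring R] (m : ℤ) (c : R) :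
    HahnSeries.single m c ∈ parityComponent R m := fun _ hk =>
  HahnSeries.coeff_single_of_ne fun h => hk (congrArg _ h)

theorem mul_mem_parityComponent [Semiring R] {x y : LaurentSeries R} {r s : ZMod 2}
    (hx : x ∈ parityComponent R r) (hy : y ∈ parityComponent R s) :
    x * y ∈ parityComponent R (r + s) := by
  intro m hm
  by_contra h
  obtain ⟨i, hi, j, hj, rfl⟩ := HahnSeries.support_mul_subset (Function.mem_support.mpr h)
  have hi' : (i : ZMod 2) = r := by_contra fun h' => hi (hx i h')
  have hj' : (j : ZMod 2) = s := by_contra fun h' => hj (hy j h')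
  exact hm (by push_cast; rw [hi', hj'])

theorem pow_mem_parityComponent [Semiring R] {x : LaurentSeries R} {r : ZMod 2}
    (hx : x ∈ parityComponent R r) (n : ℕ) : x ^ n ∈ parityComponent R (n • r) := by
  induction n with
  | zero => simpa using single_mem_parityComponent (0 : ℤ) (1 : R)
  | succ n ih => rw [pow_succ, succ_nsmul]; exact mul_mem_parityComponent ih hx

theorem disjoint_parityComponent [Semiring R] :
    Disjoint (parityComponent R 0) (parityComponent R 1) := by
  refine Submodule.disjoint_def.mpr fun x h0 h1 => HahnSeries.ext (funext fun m => ?_)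
  by_cases hm : (m : ZMod 2) = 0
  · exact h1 m (by rw [hm]; decide)
  · exact h0 m hm

theorem exists_add_mem_parityComponent [Ring R] (x : LaurentSeries R) :
    ∃ e ∈ parityComponent R 0, ∃ o ∈ parityComponent R 1, x = e + o := by
  let e : LaurentSeries R :=
    { coeff m := if (m : ZMod 2) = 0 then x.coeff m else 0
      isPWO_support' := x.isPWO_support.mono <| Function.support_subset_iff'.mpr fun m hm => by
        simp [not_not.mp ((x.mem_support m).not.mp hm)] }
  refine ⟨e, fun m hm => if_neg hm, x - e, fun m hm => ?_, by abel⟩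
  have h0 : (m : ZMod 2) = 0 := by generalize (m : ZMod 2) = k at hm; revert k; decide
  simp [e, h0]

theorem mem_parityComponent_or_of_sq_mem [CommRing R] [IsDomain R] [CharZero R]
    {x : LaurentSeries R} (hx : x ^ 2 ∈ parityComponent R 0) :
    x ∈ parityComponent R 0 ∨ x ∈ parityComponent R 1 := by
  obtain ⟨e, he, o, ho, rfl⟩ := exists_add_mem_parityComponent x
  have hcross : e * o + e * o = 0 := by
    refine Submodule.disjoint_def.mp disjoint_parityComponent _ ?_ ?_
    · rw [show e * o + e * o = (e + o) ^ 2 - e * e - o * o by ring]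
      exact sub_mem (sub_mem hx (by simpa using mul_mem_parityComponent he he))
        (by rw [show (0 : ZMod 2) = 1 + 1 from rfl]; exact mul_mem_parityComponent ho ho)
    · exact add_mem (by simpa using mul_mem_parityComponent he ho)
        (by simpa using mul_mem_parityComponent he ho)
  have heo : e * o = 0 := by
    ext m
    simpa using congrArg (HahnSeries.coeff · m) hcross
  rcases mul_eq_zero.mp heo with rfl | rfl
  · exact Or.inr (by simpa using ho)
  · exact Or.inl (by simpa using he)

end Parity

theorem coeff_zp (j m : ℤ) : (zp j).coeff m = if m = -j then 1 else 0 := by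
  simp [zp, HahnSeries.coeff_single]

theorem zp_mul_zp (i j : ℤ) : zp i * zp j = zp (i + j) := by
  rw [zp, zp, zp, HahnSeries.single_mul_single, one_mul, neg_add]

theorem coeff_zp_mul (j m : ℤ) (x : LaurentSeries ℂ) :
    (zp j * x).coeff m = x.coeff (m + j) := by
  simpa [zp] using HahnSeries.coeff_single_mul_add (r := (1 : ℂ)) (x := x) (a := m + j) (b := -j)

theorem zp_mem_parityComponent (j : ℤ) : zp j ∈ parityComponent ℂ j := by
  simpa [zp] using single_mem_parityComponent (-j) (1 : ℂ)

theorem smul_zp (a : ℂ) (j : ℤ) : a • zp j = HahnSeries.single (-j) a := by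
  ext m
  simp [zp, HahnSeries.coeff_single]

theorem sq_zp_three_add_smul_zp_one (a : ℂ) :
    (zp 3 + a • zp 1) ^ 2 = zp 6 + (2 * a) • zp 4 + a ^ 2 • zp 2 := by
  simp only [smul_zp]
  simp only [zp, sq, add_mul, mul_add, HahnSeries.single_mul_single]
  norm_num
  rw [two_mul, HahnSeries.single_add]
  abel

def oddCofactor (c : ℕ → ℂ) (n : ℕ) : LaurentSeries ℂ :=
  zp 2 ^ (n - 1) - ∑ i ∈ range (n - 1), c (2 * (n - i) - 1) • zp 2 ^ i

theorem oddCofactor_one (c : ℕ → ℂ) : oddCofactor c 1 = 1 := by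
  simp [oddCofactor]

theorem oddCofactor_add_two (c : ℕ → ℂ) (m : ℕ) :
    oddCofactor c (m + 2) = zp 2 * oddCofactor c (m + 1) - c (2 * m + 3) • 1 := by
  -- no `IsScalarTower` instance matches the `•` of `LaurentSeries ℂ` used in the definitions,
  -- so scalars are turned into constant series
  simp only [oddCofactor, ← HahnSeries.single_zero_mul_eq_smul, Nat.add_sub_cancel, mul_sub,
    Finset.mul_sum]
  rw [show m + 2 - 1 = m + 1 by omega, Finset.sum_range_succ',
    show 2 * (m + 2 - 0) - 1 = 2 * m + 3 by omega]
  have hterm (i : ℕ) : HahnSeries.single 0 (c (2 * (m + 2 - (i + 1)) - 1)) * zp 2 ^ (i + 1) =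
      zp 2 * (HahnSeries.single 0 (c (2 * (m + 1 - i) - 1)) * zp 2 ^ i) := by
    rw [show m + 2 - (i + 1) = m + 1 - i by omega]
    ring
  simp only [hterm]
  ring

theorem oddCofactor_mem_parityComponent_zero (c : ℕ → ℂ) (n : ℕ) :
    oddCofactor c n ∈ parityComponent ℂ 0 := by
  have hpow (i : ℕ) : zp 2 ^ i ∈ parityComponent ℂ 0 := by
    simpa [show (2 : ZMod 2) = 0 from rfl] using
      pow_mem_parityComponent (zp_mem_parityComponent 2) i
  exact sub_mem (hpow _) (sum_mem fun i _ => Submodule.smul_mem _ _ (hpow i))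

section Sigma2

variable (H : ℕ → ℤ → ℂ)

open Submodule

def sigma2Tail (j : ℕ) : LaurentSeries ℂ :=
  HahnSeries.ofPowerSeries ℤ ℂ (PowerSeries.mk fun k => if 1 ≤ k then H j (k:ℤ) else 0)

theorem sigma2zero_eq : sigma2zero H = 1 + sigma2Tail H 0 := rfl

theorem sigma2_eq (j : ℕ) : sigma2 H j = zp j + H j (-1) • zp 1 + sigma2Tail H j := rfl

theorem coeff_sigma2Tail (j : ℕ) (m : ℤ) :
    (sigma2Tail H j).coeff m = if 1 ≤ m then H j m else 0 := by
  rw [sigma2Tail, PowerSeries.coeff_coe, PowerSeries.coeff_mk]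
  rcases lt_or_ge m 0 with hm | hm
  · rw [if_pos hm, if_neg (by omega)]
  · lift m to ℕ using hm
    simp

theorem one_le_orderTop_sigma2Tail (j : ℕ) : 1 ≤ (sigma2Tail H j).orderTop :=
  HahnSeries.le_orderTop_iff_forall.mpr fun m hm => by
    rw [coeff_sigma2Tail, if_neg (by exact_mod_cast hm.not_ge)]

theorem coeff_sigma2zero (m : ℤ) :
    (sigma2zero H).coeff m = (if m = 0 then 1 else 0) + if 1 ≤ m then H 0 m else 0 := by
  simp [sigma2zero_eq, coeff_sigma2Tail, HahnSeries.coeff_one]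

theorem coeff_sigma2 (j : ℕ) (m : ℤ) :
    (sigma2 H j).coeff m = (if m = -j then 1 else 0) + (if m = -1 then H j (-1) else 0)
      + if 1 ≤ m then H j m else 0 := by
  simp [sigma2_eq, coeff_zp, coeff_sigma2Tail]

theorem coeff_sigma2zero_neg_natCast (k : ℕ) :
    (sigma2zero H).coeff (-k) = if k = 0 then 1 else 0 := by
  simp only [coeff_sigma2zero]
  split_ifs <;> (simp_all; try omega)

theorem coeff_sigma2_neg_natCast {k : ℕ} (hk : k ≠ 1) (j : ℕ) :
    (sigma2 H j).coeff (-k) = if k = j then 1 else 0 := by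
  simp only [coeff_sigma2]
  split_ifs <;> first | omega | simp

theorem coeff_sigma2_neg_one {j : ℕ} (hj : j ≠ 1) : (sigma2 H j).coeff (-1) = H j (-1) := by
  simp only [coeff_sigma2]
  split_ifs <;> first | omega | simp

theorem sigma2zero_mem_sigma2Set : sigma2zero H ∈ sigma2Set H := Set.mem_insert _ _

theorem sigma2_mem_sigma2Set {j : ℕ} (hj : 2 ≤ j) : sigma2 H j ∈ sigma2Set H :=
  Set.mem_insert_of_mem _ ⟨j, hj, rfl⟩

theorem sigma2Set_eq_range : sigma2Set H =
    Set.range fun k : {k : ℕ // k ≠ 1} => if k.1 = 0 then sigma2zero H else sigma2 H k := by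
  ext x
  constructor
  · rintro (rfl | ⟨j, hj, rfl⟩)
    · exact ⟨⟨0, by omega⟩, rfl⟩
    · have hj : 2 ≤ j := hj
      exact ⟨⟨j, by omega⟩, if_neg (show j ≠ 0 by omega)⟩
  · rintro ⟨⟨k, hk⟩, rfl⟩
    dsimp only
    split_ifs with h0
    · exact sigma2zero_mem_sigma2Set H
    · exact sigma2_mem_sigma2Set H (by omega)

theorem eq_zero_of_mem_span_sigma2Set {v : LaurentSeries ℂ}
    (hv : v ∈ Submodule.span ℂ (sigma2Set H)) (hcoeff : ∀ k : ℕ, k ≠ 1 → v.coeff (-k) = 0) :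
    v = 0 := by
  rw [sigma2Set_eq_range] at hv
  refine eq_zero_of_mem_span_range_of_biorthogonal
    (f := fun k : {k : ℕ // k ≠ 1} => HahnSeries.coeff.linearMap (R := ℂ) (-(k.1 : ℤ))) ?_ ?_ hv
    fun k => hcoeff k k.2
  · rintro ⟨k, hk⟩
    simp only [HahnSeries.coeff.linearMap_apply]
    split_ifs with h0
    · simp [h0, coeff_sigma2zero]
    · simp [coeff_sigma2_neg_natCast H hk]
  · rintro ⟨i, hi⟩ ⟨k, hk⟩ hik
    have hik : i ≠ k := fun h => hik (Subtype.ext h)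
    simp only [HahnSeries.coeff.linearMap_apply]
    split_ifs with h0
    · simp [coeff_sigma2zero_neg_natCast, h0 ▸ hik]
    · simp [coeff_sigma2_neg_natCast H hi, hik]

theorem sigma2_eq_zp_of_mem_span {m : ℕ} (hm : 2 ≤ m) (h : zp m ∈ span ℂ (sigma2Set H)) :
    sigma2 H m = zp m :=
  sub_eq_zero.mp <| eq_zero_of_mem_span_sigma2Set H
    (sub_mem (subset_span (sigma2_mem_sigma2Set H hm)) h) fun k hk => by
      rw [HahnSeries.coeff_sub, coeff_sigma2_neg_natCast H hk, coeff_zp]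
      split_ifs <;> first | omega | simp

theorem eq_of_mem_span_of_neg_two_le_orderTop {v : LaurentSeries ℂ}
    (hv : v ∈ span ℂ (sigma2Set H)) (hord : ((-2 : ℤ) : WithTop ℤ) ≤ v.orderTop) :
    v = v.coeff 0 • sigma2zero H + v.coeff (-2) • sigma2 H 2 := by
  rw [← sub_eq_zero]
  refine eq_zero_of_mem_span_sigma2Set H (sub_mem hv (add_mem
    (smul_mem _ _ (subset_span (sigma2zero_mem_sigma2Set H)))
    (smul_mem _ _ (subset_span (sigma2_mem_sigma2Set H le_rfl))))) fun k hk => ?_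
  simp only [HahnSeries.coeff_sub, HahnSeries.coeff_add, HahnSeries.coeff_smul, smul_eq_mul,
    coeff_sigma2zero_neg_natCast, coeff_sigma2_neg_natCast H hk]
  rcases (by omega : k = 0 ∨ k = 2 ∨ 3 ≤ k) with rfl | rfl | hk3
  · simp
  · simp
  · rw [HahnSeries.coeff_eq_zero_of_lt_orderTop
      (lt_of_lt_of_le (by exact_mod_cast (by omega)) hord)]
    simp [show k ≠ 0 by omega, show k ≠ 2 by omega]

variable (hmul : ∀ x ∈ sigma2Set H, ∀ y ∈ sigma2Set H, x * y ∈ span ℂ (sigma2Set H))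
  (hz2 : ∀ x ∈ sigma2Set H, zp 2 * x ∈ span ℂ (sigma2Set H))

include hz2 in
theorem sigma2_add_two {j : ℕ} (hj : 2 ≤ j) (h2 : (sigma2 H j).coeff 2 = 0) :
    sigma2 H (j + 2) = zp 2 * sigma2 H j - H j (-1) • sigma2 H 3 := by
  rw [eq_sub_iff_add_eq, ← sub_eq_zero]
  refine eq_zero_of_mem_span_sigma2Set H (sub_mem (add_mem
    (subset_span (sigma2_mem_sigma2Set H (by omega)))
    (smul_mem _ _ (subset_span (sigma2_mem_sigma2Set H (by omega)))))
    (hz2 _ (sigma2_mem_sigma2Set H hj))) fun k hk => ?_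
  simp only [HahnSeries.coeff_sub, HahnSeries.coeff_add, HahnSeries.coeff_smul, smul_eq_mul,
    coeff_sigma2_neg_natCast H hk, coeff_zp_mul]
  rcases (by omega : k = 0 ∨ k = 2 ∨ k = 3 ∨ 4 ≤ k) with rfl | rfl | rfl | hk4
  · simp [h2]
  · simpa [show j ≠ 0 by omega, show 0 ≠ j by omega] using
      coeff_sigma2_neg_natCast H zero_ne_one j
  · simp [coeff_sigma2_neg_one H (show j ≠ 1 by omega), show 3 ≠ j + 2 by omega]
  · rw [show -(k : ℤ) + 2 = -((k - 2 : ℕ) : ℤ) by omega,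
      coeff_sigma2_neg_natCast H (show k - 2 ≠ 1 by omega)]
    simp [show k ≠ 3 by omega, show k = j + 2 ↔ k - 2 = j by omega]

include hmul in
theorem sigma2zero_eq_one : sigma2zero H = 1 := by
  have hp : sigma2zero H ≠ 0 := fun h => by
    simpa [h] using coeff_sigma2zero_neg_natCast H 0
  have hspan : sigma2zero H * sigma2Tail H 0 ∈ span ℂ (sigma2Set H) := by
    rw [show sigma2zero H * sigma2Tail H 0 = sigma2zero H * sigma2zero H - sigma2zero H by
      rw [sigma2zero_eq]; ring]
    exact sub_mem (hmul _ (sigma2zero_mem_sigma2Set H) _ (sigma2zero_mem_sigma2Set H))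
      (subset_span (sigma2zero_mem_sigma2Set H))
  have hord : 1 ≤ (sigma2zero H * sigma2Tail H 0).orderTop := calc
    (1 : WithTop ℤ) = 0 + 1 := (zero_add 1).symm
    _ ≤ (sigma2zero H).orderTop + (sigma2Tail H 0).orderTop := by
      gcongr
      · exact le_trans (le_min (by rw [HahnSeries.orderTop_one])
          (zero_le_one.trans (one_le_orderTop_sigma2Tail H 0)))
          HahnSeries.min_orderTop_le_orderTop_add
      · exact one_le_orderTop_sigma2Tail H 0
    _ ≤ _ := HahnSeries.orderTop_add_le_mul
  have hT : sigma2Tail H 0 = 0 := (mul_eq_zero.mp (eq_zero_of_mem_span_sigma2Set H hspan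
    fun k _ => HahnSeries.coeff_eq_zero_of_lt_orderTop (lt_of_lt_of_le
      (by exact_mod_cast (by omega : -(k : ℤ) < 1)) hord))).resolve_left hp
  rw [sigma2zero_eq, hT, add_zero]

include hmul hz2

theorem sigma2_two_mul {k : ℕ} (hk : 1 ≤ k) : sigma2 H (2 * k) = zp (2 * k) := by
  induction k, hk using Nat.le_induction with
  | base =>
    refine sigma2_eq_zp_of_mem_span H le_rfl ?_
    simpa [sigma2zero_eq_one H hmul] using hz2 _ (sigma2zero_mem_sigma2Set H)
  | succ k hk ih =>
    refine sigma2_eq_zp_of_mem_span H (by omega) ?_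
    have := hz2 _ (sigma2_mem_sigma2Set H (by omega : 2 ≤ 2 * k))
    rw [ih, zp_mul_zp] at this
    convert this using 2
    push_cast; ring

theorem sigma2_three_mem_parityComponent_one : sigma2 H 3 ∈ parityComponent ℂ 1 := by
  obtain ⟨q, hq⟩ : ∃ q, q = zp 3 + H 3 (-1) • zp 1 := ⟨_, rfl⟩
  have hq_odd : q ∈ parityComponent ℂ 1 := hq ▸
    add_mem (zp_mem_parityComponent 3) (smul_mem _ _ (zp_mem_parityComponent 1))
  have hzp (k : ℕ) (hk : 1 ≤ k) : zp (2 * k : ℕ) ∈ span ℂ (sigma2Set H) :=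
    sigma2_two_mul H hmul hz2 hk ▸ subset_span (sigma2_mem_sigma2Set H (by omega))
  have hspan : sigma2 H 3 ^ 2 - q ^ 2 ∈ span ℂ (sigma2Set H) := by
    refine sub_mem (sq (sigma2 H 3) ▸ hmul _ (sigma2_mem_sigma2Set H (by norm_num)) _
      (sigma2_mem_sigma2Set H (by norm_num))) ?_
    rw [hq, sq_zp_three_add_smul_zp_one]
    exact add_mem (add_mem (hzp 3 (by norm_num)) (smul_mem _ _ (hzp 2 (by norm_num))))
      (smul_mem _ _ (hzp 1 le_rfl))
  have hord : ((-2 : ℤ) : WithTop ℤ) ≤ (sigma2 H 3 ^ 2 - q ^ 2).orderTop := by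
    have hp3 : sigma2 H 3 = q + sigma2Tail H 3 := by rw [sigma2_eq, hq, Nat.cast_ofNat]
    have hsum : ((-3 : ℤ) : WithTop ℤ) ≤ (sigma2 H 3 + q).orderTop :=
      HahnSeries.le_orderTop_iff_forall.mpr fun m hm => by
        have hm : m < -3 := by exact_mod_cast hm
        simp only [hq, HahnSeries.coeff_add, HahnSeries.coeff_smul, coeff_sigma2, coeff_zp]
        split_ifs <;> first | omega | simp
    calc ((-2 : ℤ) : WithTop ℤ) = 1 + ((-3 : ℤ) : WithTop ℤ) := by norm_cast
      _ ≤ (sigma2Tail H 3).orderTop + (sigma2 H 3 + q).orderTop :=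
        add_le_add (one_le_orderTop_sigma2Tail H 3) hsum
      _ ≤ (sigma2Tail H 3 * (sigma2 H 3 + q)).orderTop := HahnSeries.orderTop_add_le_mul
      _ = (sigma2 H 3 ^ 2 - q ^ 2).orderTop := by rw [hp3]; ring_nf
  have hsq : sigma2 H 3 ^ 2 ∈ parityComponent ℂ 0 := by
    have hp2 : sigma2 H 2 = zp 2 := sigma2_two_mul H hmul hz2 (k := 1) le_rfl
    rw [← sub_add_cancel (sigma2 H 3 ^ 2) (q ^ 2),
      eq_of_mem_span_of_neg_two_le_orderTop H hspan hord, sigma2zero_eq_one H hmul, hp2]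
    refine add_mem (add_mem (smul_mem _ _ ?_) (smul_mem _ _ (zp_mem_parityComponent 2)))
      (pow_mem_parityComponent hq_odd 2)
    simpa using single_mem_parityComponent (0 : ℤ) (1 : ℂ)
  refine (mem_parityComponent_or_of_sq_mem hsq).resolve_left fun h => ?_
  simpa [coeff_sigma2] using h (-3) (by decide)

theorem oddCofactor_mul_sigma2_three_mem_parityComponent (n : ℕ) :
    oddCofactor (fun j => H j (-1)) n * sigma2 H 3 ∈ parityComponent ℂ 1 := by
  simpa using mul_mem_parityComponent (oddCofactor_mem_parityComponent_zero _ n)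
    (sigma2_three_mem_parityComponent_one H hmul hz2)

theorem sigma2_two_mul_add_one {n : ℕ} (hn : 1 ≤ n) :
    sigma2 H (2 * n + 1) = oddCofactor (fun j => H j (-1)) n * sigma2 H 3 := by
  induction n, hn using Nat.le_induction with
  | base => simp [oddCofactor_one]
  | succ n hn ih =>
    obtain ⟨m, rfl⟩ : ∃ m, n = m + 1 := ⟨n - 1, by omega⟩
    have h2 : (sigma2 H (2 * (m + 1) + 1)).coeff 2 = 0 :=
      (ih ▸ oddCofactor_mul_sigma2_three_mem_parityComponent H hmul hz2 (m + 1)) 2 (by decide)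
    rw [show 2 * (m + 1 + 1) + 1 = 2 * (m + 1) + 1 + 2 by ring,
      sigma2_add_two H hz2 (by omega) h2, ih, show 2 * (m + 1) + 1 = 2 * m + 3 by ring,
      oddCofactor_add_two, sub_mul, mul_assoc, ← HahnSeries.single_zero_mul_eq_smul,
      ← HahnSeries.single_zero_mul_eq_smul]
    ring

theorem coeff_two_sigma2_two_mul_add_one {n : ℕ} (hn : 1 ≤ n) :
    (sigma2 H (2 * n + 1)).coeff 2 = 0 :=
  (sigma2_two_mul_add_one H hmul hz2 hn ▸
    oddCofactor_mul_sigma2_three_mem_parityComponent H hmul hz2 n) 2 (by decide)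

end Sigma2

open Finset in
/-- Every odd element of `W₂ ⊂ Σ₂` is `p₃` times a polynomial in `λ = z²`,
via the recursion `p_{2n+1} = λ p_{2n-1} - H^{2n-1}_{-1} p₃`. -/
theorem sigma2_odd_elements (H : ℕ → ℤ → ℂ)
    (hmul : ∀ x ∈ sigma2Set H, ∀ y ∈ sigma2Set H, x * y ∈ Submodule.span ℂ (sigma2Set H))
    (hz2 : ∀ x ∈ sigma2Set H, zp 2 * x ∈ Submodule.span ℂ (sigma2Set H)) :
    (∀ n : ℕ, 1 ≤ n →
      sigma2 H (2*n+1)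
        = (zp 2 ^ (n-1) - ∑ i ∈ range (n-1), H (2*(n-i)-1) (-1) • zp 2 ^ i)
            * sigma2 H 3) ∧
    (∀ n : ℕ, 2 ≤ n →
      sigma2 H (2*n+1) = zp 2 * sigma2 H (2*n-1) - H (2*n-1) (-1) • sigma2 H 3) := by
  refine ⟨fun n hn => sigma2_two_mul_add_one H hmul hz2 hn, fun n hn => ?_⟩
  obtain ⟨m, rfl⟩ : ∃ m, n = m + 2 := ⟨n - 2, by omega⟩
  rw [show 2 * (m + 2) + 1 = 2 * (m + 1) + 1 + 2 by ring,
    show 2 * (m + 2) - 1 = 2 * (m + 1) + 1 by omega]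
  exact sigma2_add_two H hz2 (by omega) (coeff_two_sigma2_two_mul_add_one H hmul hz2 (by omega))

end
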